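/- Let X be a finite graph and Y a subgraph of X obtained by deleting some edges (keeping all vertices). Then for all λ ≥ 0, F(c₁(X)*)(λ) ≤ F(c₁(Y)*)(λ), where c₁ denotes the boundary map from edge space to vertex space and F the spectral density function. -/

import Mathlib

open scoped RealInnerProductSpace

variable {V E : Type*}

noncomputable def c1 [Fintype E] [DecidableEq V] (v0 v1 : E → V) :
    EuclideanSpace ℝ E →ₗ[ℝ] EuclideanSpace ℝ V where
  toFun a := WithLp.toLp 2 (fun v =>
    (∑ e ∈ Finset.univ.filter (fun e => v1 e = v), a e)
      - (∑ e ∈ Finset.univ.filter (fun e => v0 e = v), a e))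
  map_add' a b := by
    ext v
    simp [PiLp.add_apply, Finset.sum_add_distrib]
    try ring
  map_smul' c a := by
    ext v
    simp [PiLp.smul_apply, smul_eq_mul, ← Finset.mul_sum, mul_sub]

/-- Spectral density function of a linear map of inner product spaces. -/
noncomputable def sdf {V W : Type*} [NormedAddCommGroup V] [InnerProductSpace ℝ V]
    [NormedAddCommGroup W] [InnerProductSpace ℝ W]
    (f : V →ₗ[ℝ] W) (lam : ℝ) : ℕ :=
  sSup {n : ℕ | ∃ U : Submodule ℝ V, Module.finrank ℝ U = n ∧ ∀ v ∈ U, ‖f v‖ ≤ lam * ‖v‖}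

/-- Degree of a vertex in a finite directed multigraph (loops count twice). -/
def vdeg [Fintype E] [DecidableEq V] (v0 v1 : E → V) (v : V) : ℕ :=
  (Finset.univ.filter fun e => v0 e = v).card + (Finset.univ.filter fun e => v1 e = v).card

/-- Maximal vertex degree of a finite multigraph. -/
def maxDeg [Fintype V] [Fintype E] [DecidableEq V] (v0 v1 : E → V) : ℕ :=
  Finset.univ.sup (vdeg v0 v1)

/-- The simple graph underlying a directed multigraph. -/
def supportGraph (v0 v1 : E → V) : SimpleGraph V where
  Adj u w := u ≠ w ∧ ∃ e, (v0 e = u ∧ v1 e = w) ∨ (v0 e = w ∧ v1 e = u)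
  symm := by
    constructor
    rintro u w ⟨h, e, he⟩
    exact ⟨h.symm, e, he.symm⟩
  loopless := by constructor; rintro u ⟨h, _⟩; exact h rfl

/-!
The adjoint of the boundary map is the coboundary `f ↦ (f (v₁ e) - f (v₀ e))ₑ`. Deleting edges
only drops coordinates of this vector, so `‖c₁(Y)* f‖ ≤ ‖c₁(X)* f‖` for every `f`; hence every
subspace on which `‖c₁(X)* f‖ ≤ λ ‖f‖` satisfies the same bound for `c₁(Y)*`.
-/

section SpectralDensity

variable {W W' : Type*} [NormedAddCommGroup V] [InnerProductSpace ℝ V] [FiniteDimensional ℝ V]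
  [NormedAddCommGroup W] [InnerProductSpace ℝ W] [NormedAddCommGroup W'] [InnerProductSpace ℝ W']

lemma bddAbove_sdf_set (f : V →ₗ[ℝ] W) (lam : ℝ) :
    BddAbove {n : ℕ | ∃ U : Submodule ℝ V, Module.finrank ℝ U = n ∧
      ∀ v ∈ U, ‖f v‖ ≤ lam * ‖v‖} := by
  refine ⟨Module.finrank ℝ V, ?_⟩
  rintro n ⟨U, rfl, -⟩
  exact U.finrank_le

lemma sdf_le_sdf_of_norm_le {f : V →ₗ[ℝ] W} {g : V →ₗ[ℝ] W'} (hgf : ∀ v, ‖g v‖ ≤ ‖f v‖)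
    (lam : ℝ) : sdf f lam ≤ sdf g lam := by
  refine csSup_le_csSup (bddAbove_sdf_set g lam) ⟨0, ⊥, finrank_bot ℝ V, ?_⟩ ?_
  · rintro v hv
    simp [(Submodule.mem_bot ℝ).mp hv]
  · rintro n ⟨U, hU, hf⟩
    exact ⟨U, hU, fun v hv => (hgf v).trans (hf v hv)⟩

end SpectralDensity

noncomputable def coboundary [Fintype E] (v0 v1 : E → V) :
    EuclideanSpace ℝ V →ₗ[ℝ] EuclideanSpace ℝ E where
  toFun f := WithLp.toLp 2 (fun e => f (v1 e) - f (v0 e))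
  map_add' a b := by ext e; simp only [PiLp.add_apply]; ring
  map_smul' c a := by ext e; simp only [PiLp.smul_apply, smul_eq_mul, RingHom.id_apply]; ring

lemma sum_mul_sum_fiber [Fintype V] [Fintype E] [DecidableEq V] (g : E → V) (x : V → ℝ)
    (y : E → ℝ) : ∑ v, x v * ∑ e with g e = v, y e = ∑ e, x (g e) * y e := by
  rw [← Finset.sum_fiberwise Finset.univ g]
  refine Finset.sum_congr rfl fun v _ => ?_
  rw [Finset.mul_sum]
  refine Finset.sum_congr rfl fun e he => ?_
  rw [(Finset.mem_filter.mp he).2]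

lemma adjoint_c1 [Fintype V] [Fintype E] [DecidableEq V] (v0 v1 : E → V) :
    LinearMap.adjoint (c1 v0 v1) = coboundary v0 v1 := by
  refine ((LinearMap.eq_adjoint_iff _ _).mpr fun y x => ?_).symm
  simp only [coboundary, c1, LinearMap.coe_mk, AddHom.coe_mk, PiLp.inner_apply,
    RCLike.inner_apply, conj_trivial, mul_sub, sub_mul, Finset.sum_sub_distrib]
  simp_rw [mul_comm _ (y _), sum_mul_sum_fiber]

lemma norm_restrict_le [Fintype E] (s : Finset E) (x : EuclideanSpace ℝ E) :
    ‖(WithLp.toLp 2 fun e : s => x e : EuclideanSpace ℝ s)‖ ≤ ‖x‖ := by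
  rw [EuclideanSpace.norm_eq, EuclideanSpace.norm_eq]
  refine Real.sqrt_le_sqrt ?_
  rw [Finset.sum_coe_sort s fun e => ‖x e‖ ^ 2]
  exact Finset.sum_le_sum_of_subset_of_nonneg (Finset.subset_univ s) fun e _ _ => by positivity

theorem sdf_adjoint_delete_edges_general {V E : Type*} [Fintype V] [Fintype E] [DecidableEq V]
    (v0 v1 : E → V) (s : Finset E) (lam : ℝ) :
    sdf (LinearMap.adjoint (c1 v0 v1)) lam ≤
      sdf (LinearMap.adjoint
        (c1 (fun e : {e // e ∈ s} => v0 e.1) (fun e : {e // e ∈ s} => v1 e.1))) lam := by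
  rw [adjoint_c1, adjoint_c1]
  exact sdf_le_sdf_of_norm_le (fun f => norm_restrict_le s (coboundary v0 v1 f)) lam

/-- Deleting edges from a finite graph does not decrease the spectral density
function of the adjoint of the boundary map. -/
theorem sdf_adjoint_delete_edges {V E : Type*} [Fintype V] [Fintype E] [DecidableEq V]
    (v0 v1 : E → V) (s : Finset E) (lam : ℝ) (hlam : 0 ≤ lam) :
    sdf (LinearMap.adjoint (c1 v0 v1)) lam ≤
      sdf (LinearMap.adjoint
        (c1 (fun e : {e // e ∈ s} => v0 e.1) (fun e : {e // e ∈ s} => v1 e.1))) lam :=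
  sdf_adjoint_delete_edges_general v0 v1 s lam
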